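/- arXiv:1006.1374 — 4 statements merged into one kernel-verified Lean document; each statement's English description precedes it below -/
import Mathlib

section
/- For each m ≥ 1, the function x ↦ (-1)^m · g(x,a,m) = (m-1)!/x^m - (m-1)!/(x+a)^m - m!·a/(x+a)^(m+1) is strictly positive for all x > 0 and a > 0. -/
/-!
Dividing by `(m - 1)!` and clearing denominators, the claim becomes the strict Bernoulli
inequality `x ^ m * (x + (m + 1) * a) < (x + a) ^ (m + 1)`, i.e. `1 + (m + 1) t < (1 + t) ^ (m + 1)`
for `t = a / x`.
-/

section Bernoulli

variable {R : Type*} [CommRing R] [LinearOrder R] [IsStrictOrderedRing R] {x a : R}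

lemma pow_add_mul_lt_add_pow (hx : 0 < x) (hxa : 0 ≤ x + a) (ha : a ≠ 0) {n : ℕ} (hn : 2 ≤ n) :
    x ^ n + n * x ^ (n - 1) * a < (x + a) ^ n := by
  obtain ⟨m, rfl⟩ := Nat.exists_eq_add_of_le' hn
  have hbernoulli : x ^ (m + 1) + (m + 1 : ℕ) * x ^ m * a ≤ (x + a) ^ (m + 1) :=
    pow_add_mul_le_add_pow hx.le (by linarith) (m + 1)
  have hsq : 0 < (m + 1 : ℕ) * x ^ m * a ^ 2 := by positivity
  calc x ^ (m + 2) + (m + 2 : ℕ) * x ^ (m + 2 - 1) * a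
      < x ^ (m + 2) + (m + 2 : ℕ) * x ^ (m + 1) * a + (m + 1 : ℕ) * x ^ m * a ^ 2 := by
        rw [show m + 2 - 1 = m + 1 by omega]; linarith
    _ = (x + a) * (x ^ (m + 1) + (m + 1 : ℕ) * x ^ m * a) := by push_cast; ring
    _ ≤ (x + a) * (x + a) ^ (m + 1) := mul_le_mul_of_nonneg_left hbernoulli hxa
    _ = (x + a) ^ (m + 2) := by ring

end Bernoulli

lemma one_div_pow_sub_one_div_add_pow_sub_pos {K : Type*} [Field K] [LinearOrder K]
    [IsStrictOrderedRing K] {x a : K} (hx : 0 < x) (hxa : 0 < x + a) (ha : a ≠ 0) {m : ℕ}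
    (hm : m ≠ 0) : 0 < 1 / x ^ m - 1 / (x + a) ^ m - m * a / (x + a) ^ (m + 1) := by
  have hbernoulli := pow_add_mul_lt_add_pow hx hxa.le ha (n := m + 1) (by omega)
  have hx' := hx.ne'
  have hxa' := hxa.ne'
  have hsplit : 1 / x ^ m - 1 / (x + a) ^ m - m * a / (x + a) ^ (m + 1) =
      ((x + a) ^ (m + 1) - (x ^ (m + 1) + (m + 1 : ℕ) * x ^ (m + 1 - 1) * a)) /
        (x ^ m * (x + a) ^ (m + 1)) := by
    field_simp
    push_cast
    ring
  rw [hsplit]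
  exact div_pos (sub_pos.2 hbernoulli) (by positivity)

theorem stmt_7 (m : ℕ) (hm : 1 ≤ m) (a x : ℝ) (ha : 0 < a) (hx : 0 < x) :
    0 < ((m - 1).factorial : ℝ) / x ^ m - ((m - 1).factorial : ℝ) / (x + a) ^ m -
      (m.factorial : ℝ) * a / (x + a) ^ (m + 1) := by
  have hm0 : m ≠ 0 := by omega
  have hfactorial : (m.factorial : ℝ) = m * (m - 1).factorial := by
    exact_mod_cast (Nat.mul_factorial_pred hm0).symm
  have hfactor : ((m - 1).factorial : ℝ) / x ^ m - ((m - 1).factorial : ℝ) / (x + a) ^ m -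
      (m.factorial : ℝ) * a / (x + a) ^ (m + 1) =
      (m - 1).factorial * (1 / x ^ m - 1 / (x + a) ^ m - m * a / (x + a) ^ (m + 1)) := by
    rw [hfactorial]; ring
  rw [hfactor]
  exact mul_pos (by positivity)
    (one_div_pow_sub_one_div_add_pow_sub_pos hx (by linarith) ha.ne' hm0)
end

section
/- For b ≥ a/2 > 0, the function x ↦ (1 + a/x)^(x+b) is decreasing on (0, ∞) and bounded below by e^a; hence J(x;a,b) = (1+a/x)^(x+b) - e^a is nonnegative and decreasing (the n = 0 and n = 1 conditions of the Alzer–Berg theorem that J is completely monotonic iff a ≤ 2b). -/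
/-!
Taking logarithms, it suffices that `φ x = (x + b) * log (1 + a / x)` decreases on `(0, ∞)`.
Its derivative is `log (1 + a / x) - (x + b) * a / (x * (x + a))`, and the bound
`log y ≤ (y - y⁻¹) / 2` for `y ≥ 1` (that is, `t ≤ sinh t` for `t ≥ 0`) at `y = 1 + a / x` reads
`log (1 + a / x) ≤ (x + a / 2) * a / (x * (x + a))`; this is where `a ≤ 2 * b` enters.
The lower bound `exp a` is the limit at infinity of the decreasing function.
-/

open Real Filter Topology Set

lemma Real.log_le_sub_inv_div_two {x : ℝ} (hx : 1 ≤ x) : log x ≤ (x - x⁻¹) / 2 := by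
  simpa only [sinh_log (by linarith : 0 < x)] using self_le_sinh_iff.2 (log_nonneg hx)

lemma hasDerivAt_add_mul_log_one_add_div {a b x : ℝ} (hx : x ≠ 0) (hxa : x + a ≠ 0) :
    HasDerivAt (fun x => (x + b) * log (1 + a / x))
      (log (1 + a / x) - (x + b) * a / (x * (x + a))) x := by
  have hbase : HasDerivAt (fun x => 1 + a / x) (-a / x ^ 2) x := by
    simpa [div_eq_mul_inv] using ((hasDerivAt_inv hx).const_mul a).const_add 1
  have hne : 1 + a / x ≠ 0 := by rw [one_add_div hx]; exact div_ne_zero hxa hx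
  refine (((hasDerivAt_id x).add_const b).mul (hbase.log hne)).congr_deriv ?_
  rw [id]
  field_simp
  ring

lemma log_one_add_div_le {a b x : ℝ} (ha : 0 ≤ a) (hb : a / 2 ≤ b) (hx : 0 < x) :
    log (1 + a / x) ≤ (x + b) * a / (x * (x + a)) :=
  calc log (1 + a / x) ≤ ((1 + a / x) - (1 + a / x)⁻¹) / 2 :=
        log_le_sub_inv_div_two (le_add_of_nonneg_right (by positivity))
    _ = (x + a / 2) * a / (x * (x + a)) := by field_simp; ring
    _ ≤ (x + b) * a / (x * (x + a)) := by gcongr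

lemma antitoneOn_add_mul_log_one_add_div {a b : ℝ} (ha : 0 ≤ a) (hb : a / 2 ≤ b) :
    AntitoneOn (fun x => (x + b) * log (1 + a / x)) (Ioi 0) := by
  have hderiv : ∀ x ∈ Ioi (0 : ℝ), HasDerivAt (fun x => (x + b) * log (1 + a / x))
      (log (1 + a / x) - (x + b) * a / (x * (x + a))) x := fun x (hx : 0 < x) =>
    hasDerivAt_add_mul_log_one_add_div hx.ne' (by positivity)
  refine antitoneOn_of_hasDerivWithinAt_nonpos (convex_Ioi 0)
    (fun x hx => (hderiv x hx).continuousAt.continuousWithinAt)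
    (fun x hx => (hderiv x (interior_subset hx)).hasDerivWithinAt) fun x hx => ?_
  exact sub_nonpos.2 (log_one_add_div_le ha hb (interior_subset hx))

lemma antitoneOn_one_add_div_rpow_add {a b : ℝ} (ha : 0 ≤ a) (hb : a / 2 ≤ b) :
    AntitoneOn (fun x : ℝ => (1 + a / x) ^ (x + b)) (Ioi 0) := by
  intro x (hx : 0 < x) y (hy : 0 < y) hxy
  simp only [rpow_def_of_pos (by positivity : 0 < 1 + a / x),
    rpow_def_of_pos (by positivity : 0 < 1 + a / y), mul_comm (log _)]
  exact exp_le_exp.2 (antitoneOn_add_mul_log_one_add_div ha hb hx hy hxy)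

lemma tendsto_one_add_div_rpow_add_exp (a b : ℝ) :
    Tendsto (fun x : ℝ => (1 + a / x) ^ (x + b)) atTop (𝓝 (exp a)) := by
  have hbase : Tendsto (fun x : ℝ => 1 + a / x) atTop (𝓝 1) := by
    simpa using tendsto_const_nhds.add ((tendsto_const_nhds (x := a)).div_atTop tendsto_id)
  have hprod := (tendsto_one_add_div_rpow_exp a).mul (hbase.rpow_const (p := b) (.inl one_ne_zero))
  rw [one_rpow, mul_one] at hprod
  refine hprod.congr' ?_
  filter_upwards [hbase.eventually (lt_mem_nhds one_pos)] with x hx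
  rw [← rpow_add hx]

lemma AntitoneOn.le_of_tendsto_atTop {α β : Type*} [Preorder α] [IsDirected α (· ≤ ·)]
    [TopologicalSpace β] [Preorder β] [OrderClosedTopology β] {f : α → β} {x : α} {L : β}
    (hf : AntitoneOn f (Ici x)) (hL : Tendsto f atTop (𝓝 L)) : L ≤ f x :=
  haveI : Nonempty α := ⟨x⟩
  le_of_tendsto hL (eventually_atTop.2 ⟨x, fun _ hy => hf self_mem_Ici hy hy⟩)

theorem stmt_14 (a b : ℝ) (ha : 0 < a) (hb : a / 2 ≤ b) :
    AntitoneOn (fun x : ℝ => (1 + a / x) ^ (x + b)) (Set.Ioi 0) ∧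
    (∀ x ∈ Set.Ioi (0 : ℝ), Real.exp a ≤ (1 + a / x) ^ (x + b)) ∧
    (∀ x ∈ Set.Ioi (0 : ℝ), 0 ≤ (1 + a / x) ^ (x + b) - Real.exp a) ∧
    AntitoneOn (fun x : ℝ => (1 + a / x) ^ (x + b) - Real.exp a) (Set.Ioi 0) := by
  have hanti := antitoneOn_one_add_div_rpow_add ha.le hb
  have hge : ∀ x ∈ Ioi (0 : ℝ), exp a ≤ (1 + a / x) ^ (x + b) := fun x hx =>
    (hanti.mono (Ici_subset_Ioi.2 hx)).le_of_tendsto_atTop (tendsto_one_add_div_rpow_add_exp a b)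
  exact ⟨hanti, hge, fun x hx => sub_nonneg.2 (hge x hx),
    fun x hx y hy hxy => sub_le_sub_right (hanti hx hy hxy) _⟩
end

section
/- If a > 2b > 0, then J(x;a,b) = (1+a/x)^(x+b) - e^a is negative for all sufficiently large x; in particular J(·;a,b) is not completely monotonic. -/
open Real Filter

def CompletelyMonotonic (f : ℝ → ℝ) : Prop :=
  ContDiffOn ℝ (⊤ : ℕ∞) f (Set.Ioi 0) ∧
  ∀ (n : ℕ), ∀ x ∈ Set.Ioi (0 : ℝ),
    0 ≤ (-1 : ℝ) ^ n * iteratedDerivWithin n f (Set.Ioi 0) x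

theorem stmt_15 (a b : ℝ) (hb : 0 < b) (hab : 2 * b < a) :
    (∀ᶠ x in Filter.atTop, (1 + a / x) ^ (x + b) - Real.exp a < 0) ∧
    ¬ CompletelyMonotonic (fun x : ℝ => (1 + a / x) ^ (x + b) - Real.exp a) := by
  have ha : 0 < a := by linarith
  have key : ∀ᶠ x in atTop, (1 + a / x) ^ (x + b) - Real.exp a < 0 := by
    filter_upwards [eventually_gt_atTop (max 0 (a * b / (a - 2 * b)))] with x hx
    have hx0 : 0 < x := lt_of_le_of_lt (le_max_left _ _) hx
    have hab' : 0 < a - 2 * b := by linarith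
    have hxc : a * b / (a - 2 * b) < x := lt_of_le_of_lt (le_max_right _ _) hx
    have hxc' : a * b < (a - 2 * b) * x := by
      rw [div_lt_iff₀ hab'] at hxc; linarith
    have ht0 : 0 < a / x := div_pos ha hx0
    have h1t : (0 : ℝ) < 1 + a / x := by linarith
    have hxa : 0 < x + a := by linarith
    -- log(1+t) < ((1+t) - (1+t)⁻¹)/2
    have hlog : Real.log (1 + a / x) < ((1 + a / x) - (1 + a / x)⁻¹) / 2 := by
      have hl0 : 0 < Real.log (1 + a / x) := Real.log_pos (by linarith)
      have h := Real.self_lt_sinh_iff.mpr hl0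
      rwa [Real.sinh_eq, Real.exp_log h1t, Real.exp_neg, Real.exp_log h1t] at h
    have hinv : (1 + a / x)⁻¹ = x / (x + a) := by
      rw [show 1 + a / x = (x + a) / x by field_simp, inv_div]
    have hxb : 0 < x + b := by linarith
    have hstep : (x + b) * (((1 + a / x) - (1 + a / x)⁻¹) / 2) ≤ a := by
      rw [hinv]
      have h2 : (x + b) * ((1 + a / x) - x / (x + a)) ≤ a * 2 := by
        have e1 : (1 + a / x) - x / (x + a) = a * (2 * x + a) / (x * (x + a)) := by
          field_simp; ring
        rw [e1, ← sub_nonneg]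
        have e2 : a * 2 - (x + b) * (a * (2 * x + a) / (x * (x + a)))
            = (a * ((a - 2 * b) * x - a * b)) / (x * (x + a)) := by
          field_simp; ring
        rw [e2]
        exact div_nonneg (by nlinarith) (by positivity)
      linarith [h2]
    have hmain : (x + b) * Real.log (1 + a / x) < a :=
      lt_of_lt_of_le (by nlinarith [hlog, hxb]) hstep
    have hrw : (1 + a / x) ^ (x + b) = Real.exp ((x + b) * Real.log (1 + a / x)) := by
      rw [Real.rpow_def_of_pos h1t, mul_comm]
    rw [hrw, sub_neg]
    exact Real.exp_lt_exp.mpr hmain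
  refine ⟨key, ?_⟩
  rintro ⟨-, h0⟩
  obtain ⟨N, hN⟩ := key.exists_forall_of_atTop
  set x := max N 1 with hxdef
  have hx1 : (0:ℝ) < x := lt_of_lt_of_le one_pos (le_max_right _ _)
  have := h0 0 x hx1
  rw [iteratedDerivWithin_zero] at this
  simp only [pow_zero, one_mul] at this
  have := hN x (le_max_left _ _)
  linarith
end

section
/- For fixed a > 0 and each n ∈ ℕ, the n-th derivative ∂ⁿ/∂xⁿ H(x;a) tends to 0 as x → ∞, where H(x;a) = e^a - (1+a/x)^x. -/
/-!
With `y = 1/x`, `H(x) = G(1/x)` where `G y = exp a - exp (log (1 + a y) / y)`; the quotient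
extends analytically to `y = 0` with value `a` (it is a `dslope`), so `G` is analytic at `0`
with `G 0 = 0`. By the chain rule through `x ↦ x⁻¹`, the `n`-th derivative of `x ↦ G x⁻¹` is
`Qₙ x⁻¹` with `Q₀ = G` and `Qₙ₊₁ y = -y² Qₙ' y`; each `Qₙ` is analytic at `0` and vanishes
there, so the derivatives tend to `Qₙ 0 = 0` as `x → ∞`.
-/

open Real Filter Topology

theorem AnalyticAt.dslope {𝕜 E : Type*} [NontriviallyNormedField 𝕜] [NormedAddCommGroup E]
    [NormedSpace 𝕜 E] {f : 𝕜 → E} {z : 𝕜} (hf : AnalyticAt 𝕜 f z) :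
    AnalyticAt 𝕜 (dslope f z) z :=
  let ⟨p, hp⟩ := hf
  ⟨p.fslope, hp.has_fpower_series_dslope_fslope⟩

theorem Filter.EventuallyEq.deriv_atTop {f g : ℝ → ℝ} (h : f =ᶠ[atTop] g) :
    deriv f =ᶠ[atTop] deriv g := by
  obtain ⟨c, hc⟩ := eventually_atTop.1 h
  filter_upwards [eventually_gt_atTop c] with x hx
  exact EventuallyEq.deriv_eq (eventually_of_mem (Ioi_mem_nhds hx) fun y hy => hc y hy.le)

/-- If `H x = G x⁻¹`, then `H' x = invDerivOp G x⁻¹`. -/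
noncomputable def invDerivOp (G : ℝ → ℝ) : ℝ → ℝ := fun y => -y ^ 2 * deriv G y

theorem invDerivOp_apply_zero (G : ℝ → ℝ) : invDerivOp G 0 = 0 := by
  simp [invDerivOp]

theorem iterate_invDerivOp_apply_zero {G : ℝ → ℝ} (hG : G 0 = 0) (n : ℕ) :
    invDerivOp^[n] G 0 = 0 := by
  cases n with
  | zero => exact hG
  | succ n => rw [Function.iterate_succ_apply', invDerivOp_apply_zero]

theorem AnalyticAt.invDerivOp {G : ℝ → ℝ} {y : ℝ} (hG : AnalyticAt ℝ G y) :
    AnalyticAt ℝ (invDerivOp G) y :=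
  (analyticAt_id.pow 2).neg.mul hG.deriv

theorem AnalyticAt.iterate_invDerivOp {G : ℝ → ℝ} {y : ℝ} (hG : AnalyticAt ℝ G y) (n : ℕ) :
    AnalyticAt ℝ (_root_.invDerivOp^[n] G) y := by
  induction n with
  | zero => exact hG
  | succ n ih => rw [Function.iterate_succ_apply']; exact ih.invDerivOp

theorem hasDerivAt_comp_inv {G : ℝ → ℝ} {x : ℝ} (hx : x ≠ 0)
    (hG : DifferentiableAt ℝ G x⁻¹) :
    HasDerivAt (fun t => G t⁻¹) (invDerivOp G x⁻¹) x := by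
  have h : invDerivOp G x⁻¹ = deriv G x⁻¹ * -(x ^ 2)⁻¹ := by
    simp only [invDerivOp, inv_pow]
    ring
  exact h ▸ hG.hasDerivAt.comp x (hasDerivAt_inv hx)

theorem iteratedDeriv_eventuallyEq_iterate_invDerivOp {G H : ℝ → ℝ}
    (hG : ∀ᶠ y in 𝓝[>] 0, AnalyticAt ℝ G y) (hH : H =ᶠ[atTop] fun x => G x⁻¹) (n : ℕ) :
    iteratedDeriv n H =ᶠ[atTop] fun x => invDerivOp^[n] G x⁻¹ := by
  induction n with
  | zero => simpa using hH
  | succ n ih =>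
    rw [iteratedDeriv_succ, Function.iterate_succ_apply']
    refine ih.deriv_atTop.trans ?_
    filter_upwards [tendsto_inv_atTop_nhdsGT_zero.eventually hG, eventually_gt_atTop 0]
      with x hGx hx
    exact (hasDerivAt_comp_inv hx.ne' (hGx.iterate_invDerivOp n).differentiableAt).deriv

theorem tendsto_iteratedDeriv_atTop_of_eventuallyEq_comp_inv {G H : ℝ → ℝ}
    (hG : AnalyticAt ℝ G 0) (hG0 : G 0 = 0) (hH : H =ᶠ[atTop] fun x => G x⁻¹) (n : ℕ) :
    Tendsto (iteratedDeriv n H) atTop (𝓝 0) := by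
  have hQ : ContinuousAt (invDerivOp^[n] G) 0 := (hG.iterate_invDerivOp n).continuousAt
  rw [← iterate_invDerivOp_apply_zero hG0 n]
  refine (hQ.tendsto.comp tendsto_inv_atTop_zero).congr' ?_
  exact (iteratedDeriv_eventuallyEq_iterate_invDerivOp
    (nhdsWithin_le_nhds hG.eventually_analyticAt) hH n).symm

theorem analyticAt_dslope_log_one_add_mul (a : ℝ) :
    AnalyticAt ℝ (dslope (fun y => log (1 + a * y)) 0) 0 :=
  ((analyticAt_const.add (analyticAt_const.mul analyticAt_id)).log (by simp)).dslope

theorem dslope_log_one_add_mul_zero (a : ℝ) :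
    dslope (fun y => log (1 + a * y)) 0 0 = a := by
  rw [dslope_same]
  have h : HasDerivAt (fun y => 1 + a * y) a 0 := by
    simpa using ((hasDerivAt_id (0 : ℝ)).const_mul a).const_add 1
  exact ((hasDerivAt_log (by norm_num)).comp 0 h).deriv.trans (by simp)

theorem one_add_div_rpow_eq_exp_dslope {a x : ℝ} (hx : x ≠ 0) (h : 0 < 1 + a / x) :
    (1 + a / x) ^ x = exp (dslope (fun y => log (1 + a * y)) 0 x⁻¹) := by
  rw [dslope_of_ne _ (inv_ne_zero hx), slope_def_field, rpow_def_of_pos h]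
  simp [div_eq_mul_inv, mul_comm]

theorem stmt_19_general (a : ℝ) (n : ℕ) :
    Filter.Tendsto
      (iteratedDeriv n (fun x : ℝ => Real.exp a - (1 + a / x) ^ x))
      Filter.atTop (nhds 0) := by
  refine tendsto_iteratedDeriv_atTop_of_eventuallyEq_comp_inv
    (G := fun y => exp a - exp (dslope (fun y => log (1 + a * y)) 0 y))
    (analyticAt_const.sub (analyticAt_dslope_log_one_add_mul a).rexp)
    (by simp only [dslope_log_one_add_mul_zero, sub_self]) ?_ n
  have hbase : Tendsto (fun x : ℝ => 1 + a / x) atTop (𝓝 1) := by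
    simpa using (tendsto_const_nhds (x := (1 : ℝ))).add (tendsto_const_nhds.div_atTop tendsto_id)
  filter_upwards [hbase.eventually (lt_mem_nhds one_pos), eventually_gt_atTop 0] with x h hx
  rw [one_add_div_rpow_eq_exp_dslope hx.ne' h]

theorem stmt_19 (a : ℝ) (ha : 0 < a) (n : ℕ) :
    Filter.Tendsto
      (iteratedDeriv n (fun x : ℝ => Real.exp a - (1 + a / x) ^ x))
      Filter.atTop (nhds 0) :=
  stmt_19_general a n
end
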